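/- arXiv:2404.16491 — 5 statements merged into one kernel-verified Lean document; each statement's English description precedes it below -/
import Mathlib

section
/- Let (X, 𝒜, μ) be a measure space, u : X → ℂ with |u(x)| > ε a.e. for some ε > 0. Then the multiplication operator M_u on the Lorentz space L(p,q) (1 < p ≤ ∞, 1 ≤ q ≤ ∞) is surjective: for every h ∈ L(p,q) there exists g ∈ L(p,q) with ‖g‖_{pq} ≤ (1/ε)‖h‖_{pq} and u·g = h almost everywhere. Hence the descent of M_u equals 0. -/
open MeasureTheory ENNReal Set

noncomputable section

/-- The distribution function `μ_f(s) = μ {x : |f x| > s}`. -/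
def distrib {X : Type*} [MeasurableSpace X] (μ : Measure X) (f : X → ℂ) (s : ℝ) : ℝ≥0∞ :=
  μ {x | s < ‖f x‖}

/-- The non-increasing rearrangement `f*(t) = inf {s > 0 : μ_f(s) ≤ t}` (with value `∞`
if no such `s` exists). -/
def rearr {X : Type*} [MeasurableSpace X] (μ : Measure X) (f : X → ℂ) (t : ℝ) : ℝ≥0∞ :=
  sInf (ENNReal.ofReal '' {s : ℝ | 0 < s ∧ distrib μ f s ≤ ENNReal.ofReal t})

/-- The average function `f**(t) = (1/t) ∫₀ᵗ f*(s) ds`. -/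
def avgRearr {X : Type*} [MeasurableSpace X] (μ : Measure X) (f : X → ℂ) (t : ℝ) : ℝ≥0∞ :=
  (ENNReal.ofReal t)⁻¹ * ∫⁻ s in Set.Ioc (0 : ℝ) t, rearr μ f s

/-- The Lorentz `L(p,q)` norm of `f`. -/
def lorentzNorm {X : Type*} [MeasurableSpace X] (μ : Measure X) (p q : ℝ≥0∞) (f : X → ℂ) :
    ℝ≥0∞ :=
  if q = ∞ then ⨆ t ∈ Set.Ioi (0 : ℝ), ENNReal.ofReal t ^ (1 / p.toReal) * avgRearr μ f t
  else (ENNReal.ofReal (q.toReal / p.toReal) *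
      ∫⁻ t in Set.Ioi (0 : ℝ),
        (ENNReal.ofReal t ^ (1 / p.toReal) * avgRearr μ f t) ^ q.toReal *
          (ENNReal.ofReal t)⁻¹) ^ (1 / q.toReal)

lemma rearr_le_of_ae {X : Type*} [MeasurableSpace X] (μ : Measure X)
    {g h : X → ℂ} {c : ℝ} (hc : 0 < c)
    (hb : ∀ᵐ x ∂μ, ‖g x‖ ≤ c * ‖h x‖) (t : ℝ) :
    rearr μ g t ≤ ENNReal.ofReal c * rearr μ h t := by
  have hdist : ∀ s : ℝ, distrib μ g (c * s) ≤ distrib μ h s := by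
    intro s
    refine measure_mono_ae (hb.mono fun x hx hxs => ?_)
    exact lt_of_mul_lt_mul_left (lt_of_lt_of_le hxs hx) hc.le
  have hc0 : ENNReal.ofReal c ≠ 0 := by simp [hc]
  have hct : ENNReal.ofReal c ≠ ∞ := ofReal_ne_top
  rw [mul_comm, ← ENNReal.div_le_iff_le_mul (Or.inl hc0) (Or.inl hct)]
  refine le_sInf ?_
  rintro y ⟨s, ⟨hs0, hsd⟩, rfl⟩
  rw [ENNReal.div_le_iff_le_mul (Or.inl hc0) (Or.inl hct), ← ENNReal.ofReal_mul hs0.le]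
  refine sInf_le ⟨s * c, ⟨by positivity, ?_⟩, rfl⟩
  rw [mul_comm]
  exact (hdist s).trans hsd

lemma avgRearr_le_of_ae {X : Type*} [MeasurableSpace X] (μ : Measure X)
    {g h : X → ℂ} {c : ℝ} (hc : 0 < c)
    (hb : ∀ᵐ x ∂μ, ‖g x‖ ≤ c * ‖h x‖) (t : ℝ) :
    avgRearr μ g t ≤ ENNReal.ofReal c * avgRearr μ h t := by
  rw [avgRearr, avgRearr]
  calc (ENNReal.ofReal t)⁻¹ * ∫⁻ s in Set.Ioc (0 : ℝ) t, rearr μ g s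
      ≤ (ENNReal.ofReal t)⁻¹ * ∫⁻ s in Set.Ioc (0 : ℝ) t, ENNReal.ofReal c * rearr μ h s :=
        mul_le_mul_right (lintegral_mono fun s => rearr_le_of_ae μ hc hb s) _
    _ = ENNReal.ofReal c * ((ENNReal.ofReal t)⁻¹ * ∫⁻ s in Set.Ioc (0 : ℝ) t, rearr μ h s) := by
        rw [lintegral_const_mul' _ _ ofReal_ne_top]; ring

lemma lorentzNorm_le_of_ae {X : Type*} [MeasurableSpace X] (μ : Measure X)
    {g h : X → ℂ} {c : ℝ} (hc : 0 < c)
    (hb : ∀ᵐ x ∂μ, ‖g x‖ ≤ c * ‖h x‖) (p q : ℝ≥0∞) (hq : 1 ≤ q) :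
    lorentzNorm μ p q g ≤ ENNReal.ofReal c * lorentzNorm μ p q h := by
  rw [lorentzNorm, lorentzNorm]
  split_ifs with hqt
  · refine iSup₂_le fun t ht => ?_
    calc ENNReal.ofReal t ^ (1 / p.toReal) * avgRearr μ g t
        ≤ ENNReal.ofReal t ^ (1 / p.toReal) * (ENNReal.ofReal c * avgRearr μ h t) :=
          mul_le_mul_right (avgRearr_le_of_ae μ hc hb t) _
      _ = ENNReal.ofReal c * (ENNReal.ofReal t ^ (1 / p.toReal) * avgRearr μ h t) := by ring
      _ ≤ ENNReal.ofReal c *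
          ⨆ t ∈ Set.Ioi (0 : ℝ), ENNReal.ofReal t ^ (1 / p.toReal) * avgRearr μ h t :=
          mul_le_mul_right (le_iSup₂ (f := fun t _ =>
            ENNReal.ofReal t ^ (1 / p.toReal) * avgRearr μ h t) t ht) _
  · have hr : 0 < q.toReal := by
      have := ENNReal.toReal_mono hqt hq
      simpa using lt_of_lt_of_le one_pos this
    set r := q.toReal
    set c' := ENNReal.ofReal c with hc'
    have hc't : c' ≠ ∞ := ofReal_ne_top
    have hcr : c' ^ r ≠ ∞ := (ENNReal.rpow_lt_top_of_nonneg hr.le hc't).ne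
    have hint : (∫⁻ t in Set.Ioi (0 : ℝ),
        (ENNReal.ofReal t ^ (1 / p.toReal) * avgRearr μ g t) ^ r * (ENNReal.ofReal t)⁻¹)
        ≤ c' ^ r * ∫⁻ t in Set.Ioi (0 : ℝ),
        (ENNReal.ofReal t ^ (1 / p.toReal) * avgRearr μ h t) ^ r * (ENNReal.ofReal t)⁻¹ := by
      rw [← lintegral_const_mul' _ _ hcr]
      refine lintegral_mono fun t => ?_
      have h1 : ENNReal.ofReal t ^ (1 / p.toReal) * avgRearr μ g t
          ≤ c' * (ENNReal.ofReal t ^ (1 / p.toReal) * avgRearr μ h t) := by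
        calc ENNReal.ofReal t ^ (1 / p.toReal) * avgRearr μ g t
            ≤ ENNReal.ofReal t ^ (1 / p.toReal) * (c' * avgRearr μ h t) :=
              mul_le_mul_right (avgRearr_le_of_ae μ hc hb t) _
          _ = c' * (ENNReal.ofReal t ^ (1 / p.toReal) * avgRearr μ h t) := by ring
      calc (ENNReal.ofReal t ^ (1 / p.toReal) * avgRearr μ g t) ^ r * (ENNReal.ofReal t)⁻¹
          ≤ (c' * (ENNReal.ofReal t ^ (1 / p.toReal) * avgRearr μ h t)) ^ r *
            (ENNReal.ofReal t)⁻¹ :=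
            mul_le_mul_left (ENNReal.rpow_le_rpow h1 hr.le) _
        _ = c' ^ r * ((ENNReal.ofReal t ^ (1 / p.toReal) * avgRearr μ h t) ^ r *
            (ENNReal.ofReal t)⁻¹) := by
            rw [ENNReal.mul_rpow_of_nonneg _ _ hr.le]; ring
    calc (ENNReal.ofReal (r / p.toReal) *
        ∫⁻ t in Set.Ioi (0 : ℝ),
          (ENNReal.ofReal t ^ (1 / p.toReal) * avgRearr μ g t) ^ r *
            (ENNReal.ofReal t)⁻¹) ^ (1 / r)
        ≤ (c' ^ r * (ENNReal.ofReal (r / p.toReal) *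
          ∫⁻ t in Set.Ioi (0 : ℝ),
            (ENNReal.ofReal t ^ (1 / p.toReal) * avgRearr μ h t) ^ r *
              (ENNReal.ofReal t)⁻¹)) ^ (1 / r) := by
          refine ENNReal.rpow_le_rpow ?_ (by positivity)
          calc ENNReal.ofReal (r / p.toReal) * _ ≤ ENNReal.ofReal (r / p.toReal) * (c' ^ r * _) :=
                mul_le_mul_right hint _
            _ = c' ^ r * _ := by ring
      _ = c' * (ENNReal.ofReal (r / p.toReal) *
          ∫⁻ t in Set.Ioi (0 : ℝ),
            (ENNReal.ofReal t ^ (1 / p.toReal) * avgRearr μ h t) ^ r *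
              (ENNReal.ofReal t)⁻¹) ^ (1 / r) := by
          rw [ENNReal.mul_rpow_of_nonneg _ _ (by positivity : (0:ℝ) ≤ 1 / r),
            ← ENNReal.rpow_mul, mul_one_div_cancel hr.ne', ENNReal.rpow_one]

/-- If `|u| > ε` a.e. then the multiplication operator `M_u` is surjective on `L(p,q)`
with `‖g‖_{pq} ≤ (1/ε)‖h‖_{pq}` for the preimage; hence the descent of `M_u` is `0`. -/
theorem descent_mul_eq_zero {X : Type*} [MeasurableSpace X] (μ : Measure X)
    (u : X → ℂ) (hu : Measurable u)
    (ε : ℝ) (hε : 0 < ε) (hae : ∀ᵐ x ∂μ, ε < ‖u x‖)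
    (p q : ℝ≥0∞) (hp : 1 < p) (hq : 1 ≤ q) :
    ∀ h : X → ℂ, Measurable h → lorentzNorm μ p q h < ∞ →
      ∃ g : X → ℂ, Measurable g ∧
        lorentzNorm μ p q g ≤ ENNReal.ofReal (1 / ε) * lorentzNorm μ p q h ∧
        (fun x => u x * g x) =ᵐ[μ] h := by
  intro h hh _
  refine ⟨fun x => (u x)⁻¹ * h x, (hu.inv).mul hh, ?_, ?_⟩
  · refine lorentzNorm_le_of_ae μ (by positivity : 0 < 1 / ε) ?_ p q hq
    filter_upwards [hae] with x hx
    rw [norm_mul, norm_inv, one_div]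
    have : ‖u x‖⁻¹ ≤ ε⁻¹ := inv_anti₀ hε hx.le
    exact mul_le_mul_of_nonneg_right this (norm_nonneg _)
  · filter_upwards [hae] with x hx
    have hux : u x ≠ 0 := by
      intro h0; rw [h0, norm_zero] at hx; linarith
    simp [← mul_assoc, mul_inv_cancel₀ hux]
end
end

section
/- Let (X, 𝒜, μ) be σ-finite and complete, T : X → X non-singular measurable, u : X → ℂ measurable such that h_T = d(μ∘T⁻¹)/dμ vanishes a.e. on the complement of the support of u. If h : X → ℂ is measurable with (∏_{i=1}^{k} u∘Tⁱ)·(h∘Tᵏ) = 0 a.e., then h∘Tᵏ = 0 almost everywhere on X, and consequently h = 0 a.e. on {x : h_{Tᵏ}(x) > 0}. -/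
open MeasureTheory

/-- If `h_T = 0` a.e. off the support of `u` and `(∏_{i=1}^k u∘Tⁱ)·(h∘Tᵏ) = 0` a.e., then
`h∘Tᵏ = 0` a.e., and consequently `h = 0` a.e. on `{h_{Tᵏ} > 0}`. -/
theorem ae_zero_of_wco_pow_zero {X : Type*} [MeasurableSpace X] (μ : Measure X)
    [SigmaFinite μ] (hc : μ.IsComplete) (T : X → X) (hT : Measurable T)
    (hns : ∀ A : Set X, MeasurableSet A → μ A = 0 → μ (T ⁻¹' A) = 0)
    (u : X → ℂ) (hu : Measurable u)
    (hsupp : ∀ᵐ x ∂μ, u x = 0 → (μ.map T).rnDeriv μ x = 0)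
    (k : ℕ) (hk : 1 ≤ k) (h : X → ℂ) (hh : Measurable h)
    (hzero : (fun x => (∏ i ∈ Finset.Icc 1 k, u (T^[i] x)) * h (T^[k] x)) =ᵐ[μ] 0) :
    (fun x => h (T^[k] x)) =ᵐ[μ] 0 ∧
      ∀ᵐ x ∂μ, 0 < (μ.map (T^[k])).rnDeriv μ x → h x = 0 := by
  have hTk : ∀ j, Measurable (T^[j]) := fun j => hT.iterate j
  have hns' : ∀ j, ∀ A : Set X, MeasurableSet A → μ A = 0 → μ (T^[j] ⁻¹' A) = 0 := by
    intro j
    induction j with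
    | zero => intro A hA h0; simpa using h0
    | succ n ih =>
      intro A hA h0
      rw [Function.iterate_succ, Set.preimage_comp]
      exact hns _ ((hTk n) hA) (ih A hA h0)
  have hac : ∀ j, μ.map (T^[j]) ≪ μ := by
    intro j
    refine Measure.AbsolutelyContinuous.mk fun A hA h0 => ?_
    rw [Measure.map_apply (hTk j) hA]
    exact hns' j A hA h0
  have hacT : μ.map T ≪ μ := by
    have := hac 1
    simpa [Function.iterate_one] using this
  -- the set where u vanishes
  have hZmeas : MeasurableSet {x | u x = 0} := hu (measurableSet_singleton 0)
  -- μ (T⁻¹ {u = 0}) = 0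
  have hN0 : μ (T ⁻¹' {x | u x = 0}) = 0 := by
    rw [← Measure.map_apply hT hZmeas,
      ← Measure.setLIntegral_rnDeriv hacT]
    rw [setLIntegral_eq_zero_iff hZmeas (Measure.measurable_rnDeriv _ _)]
    filter_upwards [hsupp] with x hx hx0
    exact hx hx0
  have hNmeas : MeasurableSet (T ⁻¹' {x | u x = 0}) := hT hZmeas
  -- a.e., all the factors are nonzero
  have hfac : ∀ᵐ x ∂μ, ∀ i, 1 ≤ i → u (T^[i] x) ≠ 0 := by
    rw [MeasureTheory.ae_all_iff]
    intro i
    by_cases hi : 1 ≤ i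
    · obtain ⟨j, rfl⟩ := Nat.exists_eq_add_of_le' hi
      have hnull : μ {x | u (T^[j + 1] x) = 0} = 0 := by
        have heq : {x | u (T^[j + 1] x) = 0} = T^[j] ⁻¹' (T ⁻¹' {x | u x = 0}) := by
          ext x
          simp only [Set.mem_setOf_eq, Set.mem_preimage, Function.iterate_succ_apply']
        rw [heq]
        exact hns' j _ hNmeas hN0
      rw [ae_iff]
      simpa using hnull
    · filter_upwards with x h1 using absurd h1 hi
  have part1 : (fun x => h (T^[k] x)) =ᵐ[μ] 0 := by
    filter_upwards [hzero, hfac] with x hx hfx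
    have hx' : (∏ i ∈ Finset.Icc 1 k, u (T^[i] x)) * h (T^[k] x) = 0 := hx
    rcases mul_eq_zero.mp hx' with hp | hh0
    · exact absurd hp (Finset.prod_ne_zero_iff.mpr fun i hi =>
        hfx i (Finset.mem_Icc.mp hi).1)
    · exact hh0
  refine ⟨part1, ?_⟩
  have hSmeas : MeasurableSet {x | h x ≠ 0} :=
    (hh (measurableSet_singleton 0)).compl
  have hS0 : (μ.map (T^[k])) {x | h x ≠ 0} = 0 := by
    rw [Measure.map_apply (hTk k) hSmeas]
    have : T^[k] ⁻¹' {x | h x ≠ 0} = {x | ¬ h (T^[k] x) = 0} := rfl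
    rw [this, ← ae_iff]
    exact part1
  have : ∀ᵐ x ∂μ, x ∈ {x | h x ≠ 0} → (μ.map (T^[k])).rnDeriv μ x = 0 := by
    rw [← setLIntegral_eq_zero_iff hSmeas (Measure.measurable_rnDeriv _ _)]
    rw [Measure.setLIntegral_rnDeriv (hac k)]
    exact hS0
  filter_upwards [this] with x hx hpos
  by_contra hne
  exact absurd (hx hne) (by simpa using hpos.ne')
end

section
/- Let (X, 𝒜, μ) be σ-finite, T : X → X a measurable map with μ(T(A)) ≤ μ(A) for every measurable A with measurable image, and suppose T is non-singular. Let X_k = {x : h_{Tᵏ}(x) = 0}. If almost every point of X_kᶜ = X \ X_k lies in T^{k+1}(X_kᶜ) (i.e. μ(X_kᶜ \ T^{k+1}(X_kᶜ)) = 0), then μ_k ≪ μ_{k+1}; hence the measures μ_k and μ_{k+1} are equivalent. -/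
/-!
Since `μ_k ≪ μ`, the density `h_{Tᵏ}` is `μ_k`-a.e. positive, so by the hypothesis
`μ_k`-almost every point lies in the range of `T^{k+1}`. On that range a `μ_{k+1}`-null set `A`
is the image of the `μ`-null set `T^{-(k+1)} A`, and images of null sets are null because `T`
does not increase measure. The converse `μ_{k+1} ≪ μ_k` is non-singularity pushed forward
by `Tᵏ`.
-/

namespace MeasureTheory

theorem measure_image_eq_zero_of_measure_image_le {α β : Type*} [MeasurableSpace α]
    [MeasurableSpace β] {μ : Measure α} {ν : Measure β} {f : α → β}
    (himg : ∀ A, MeasurableSet A → ν (f '' A) ≤ μ A) {s : Set α} (hs : μ s = 0) :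
    ν (f '' s) = 0 := by
  refine measure_mono_null (Set.image_mono (subset_toMeasurable μ s)) (le_antisymm ?_ bot_le)
  calc ν (f '' toMeasurable μ s) ≤ μ (toMeasurable μ s) :=
        himg _ (measurableSet_toMeasurable μ s)
    _ = 0 := by rw [measure_toMeasurable, hs]

theorem measure_iterate_image_eq_zero_of_measure_image_le {α : Type*} [MeasurableSpace α]
    {μ : Measure α} {T : α → α} (himg : ∀ A, MeasurableSet A → μ (T '' A) ≤ μ A)
    (n : ℕ) {s : Set α} (hs : μ s = 0) : μ (T^[n] '' s) = 0 := by
  induction n with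
  | zero => simpa using hs
  | succ n ih =>
    rw [Function.iterate_succ', Set.image_comp]
    exact measure_image_eq_zero_of_measure_image_le himg ih

theorem Measure.AbsolutelyContinuous.map_of_ae_mem_range {α β : Type*} [MeasurableSpace α]
    [MeasurableSpace β] {μ : Measure α} {ν ρ : Measure β} {f : α → β} (hf : Measurable f)
    (himage_null : ∀ s, μ s = 0 → ν (f '' s) = 0) (hρν : ρ ≪ ν)
    (hrange : ∀ᵐ y ∂ρ, y ∈ Set.range f) : ρ ≪ μ.map f := by
  refine Measure.AbsolutelyContinuous.mk fun A hA hA0 => ?_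
  rw [Measure.map_apply hf hA] at hA0
  have hA_range : ρ (A ∩ Set.range f) = 0 := by
    rw [← Set.image_preimage_eq_inter_range]
    exact hρν (himage_null _ hA0)
  rw [measure_eq_zero_iff_ae_notMem] at hA_range ⊢
  filter_upwards [hA_range, hrange] with y hy hy_range hyA
  exact hy ⟨hyA, hy_range⟩

theorem Measure.quasiMeasurePreserving_of_preimage_null {α : Type*} [MeasurableSpace α]
    {μ : Measure α} {T : α → α} (hT : Measurable T)
    (hns : ∀ A, MeasurableSet A → μ A = 0 → μ (T ⁻¹' A) = 0) :
    Measure.QuasiMeasurePreserving T μ μ :=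
  ⟨hT, Measure.AbsolutelyContinuous.mk fun A hA hA0 => by
    rw [Measure.map_apply hT hA]
    exact hns A hA hA0⟩

end MeasureTheory

open MeasureTheory

/-- If `μ(T(A)) ≤ μ(A)` for measurable `A`, `T` is non-singular, and almost every point of
`X_kᶜ` lies in `T^{k+1}(X_kᶜ)`, where `X_k = {h_{Tᵏ} = 0}`, then `μ_k ≪ μ_{k+1}`, hence
the measures `μ_k` and `μ_{k+1}` are equivalent. -/
theorem measures_equiv_of_image_cond {X : Type*} [MeasurableSpace X] (μ : Measure X)
    [SigmaFinite μ] (T : X → X) (hT : Measurable T)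
    (himg : ∀ A : Set X, MeasurableSet A → μ (T '' A) ≤ μ A)
    (hns : ∀ A : Set X, MeasurableSet A → μ A = 0 → μ (T ⁻¹' A) = 0)
    (k : ℕ)
    (hXk : μ ({x | (μ.map (T^[k])).rnDeriv μ x = 0}ᶜ \
      T^[k + 1] '' ({x | (μ.map (T^[k])).rnDeriv μ x = 0}ᶜ)) = 0) :
    μ.map (T^[k]) ≪ μ.map (T^[k + 1]) ∧ μ.map (T^[k + 1]) ≪ μ.map (T^[k]) := by
  have hqmp := Measure.quasiMeasurePreserving_of_preimage_null hT hns
  have hac : μ.map (T^[k]) ≪ μ := (hqmp.iterate k).absolutelyContinuous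
  constructor
  · refine hac.map_of_ae_mem_range (hT.iterate (k + 1))
      (fun s hs => measure_iterate_image_eq_zero_of_measure_image_le himg (k + 1) hs) ?_
    have hcover := hac (measure_eq_zero_iff_ae_notMem.1 hXk)
    filter_upwards [Measure.rnDeriv_pos hac, hcover] with x hx_pos hx_cover
    by_contra hx_range
    exact hx_cover ⟨hx_pos.ne', fun ⟨y, _, hy⟩ => hx_range ⟨y, hy⟩⟩
  · rw [Function.iterate_succ, ← Measure.map_map (hT.iterate k) hT]
    exact hqmp.absolutelyContinuous.map (hT.iterate k)
end

section
/- Consider the Lebesgue measure space on ℝ, T(x) = x − 1, and u = χ_{ℝ \ [0,1]} (u(x) = 0 for x ∈ [0,1], u(x) = 1 otherwise). Then for every k ≥ 0, the indicator χ_{[k+1,k+2]} lies in the range of W_{u,T}^k (with preimage χ_{[1,2]}) but not in the range of W_{u,T}^{k+1} (in the a.e. sense); hence the descent of W_{u,T} is infinite, even though each restriction T|_{Tᵏ(ℝ)} is injective. -/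
open MeasureTheory

/-- On `ℝ` with Lebesgue measure, `T x = x - 1` and `u = χ_{ℝ \ [0,1]}`: for every `k`, the
indicator `χ_{[k+1,k+2]}` is in the range of `W_{u,T}^k` (with preimage `χ_{[1,2]}`) but not
in the range of `W_{u,T}^{k+1}` in the a.e. sense; hence the descent of `W_{u,T}` is
infinite, even though `T` is injective. -/
theorem descent_wco_infinite
    (T : ℝ → ℝ) (hTdef : T = fun x => x - 1)
    (u : ℝ → ℂ) (hudef : u = fun x => if x ∈ Set.Icc (0 : ℝ) 1 then 0 else 1) :
    Function.Injective T ∧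
      ∀ k : ℕ,
        ((fun x => (∏ i ∈ Finset.Icc 1 k, u (T^[i] x)) *
            (Set.Icc (1 : ℝ) 2).indicator (1 : ℝ → ℂ) (T^[k] x))
          =ᵐ[volume] (Set.Icc ((k : ℝ) + 1) ((k : ℝ) + 2)).indicator (1 : ℝ → ℂ)) ∧
        ¬ ∃ h : ℝ → ℂ, Measurable h ∧
            (fun x => (∏ i ∈ Finset.Icc 1 (k + 1), u (T^[i] x)) * h (T^[k + 1] x))
              =ᵐ[volume] (Set.Icc ((k : ℝ) + 1) ((k : ℝ) + 2)).indicator (1 : ℝ → ℂ) := by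
  have hT : ∀ (n : ℕ) (x : ℝ), T^[n] x = x - n := by
    intro n
    induction n with
    | zero => simp
    | succ n ih =>
      intro x
      rw [Function.iterate_succ_apply', ih, hTdef]
      push_cast; ring
  constructor
  · intro a b hab
    rw [hTdef] at hab
    simpa using hab
  intro k
  constructor
  · have h0 : volume ({(k : ℝ) + 1} : Set ℝ) = 0 := measure_singleton _
    filter_upwards [compl_mem_ae_iff.mpr h0] with x hx
    simp only [Set.mem_compl_iff, Set.mem_singleton_iff] at hx
    rw [hT]
    by_cases hmem : x ∈ Set.Icc ((k : ℝ) + 1) ((k : ℝ) + 2)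
    · obtain ⟨h1, h2⟩ := hmem
      have h1' : (k : ℝ) + 1 < x := lt_of_le_of_ne h1 (Ne.symm hx)
      have hprod : ∀ i ∈ Finset.Icc 1 k, u (T^[i] x) = 1 := by
        intro i hi
        rw [hT, hudef]
        rw [Finset.mem_Icc] at hi
        have hik : (i : ℝ) ≤ k := by exact_mod_cast hi.2
        simp only [Set.mem_Icc]
        rw [if_neg]
        push_neg
        intro _
        linarith
      rw [Finset.prod_congr rfl hprod, Finset.prod_const_one, one_mul]
      have hm1 : x - (k : ℝ) ∈ Set.Icc (1 : ℝ) 2 := ⟨by linarith, by linarith⟩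
      have hm2 : x ∈ Set.Icc ((k : ℝ) + 1) ((k : ℝ) + 2) := ⟨h1, h2⟩
      rw [Set.indicator_of_mem hm1, Set.indicator_of_mem hm2]
      simp
    · have hnm1 : x - (k : ℝ) ∉ Set.Icc (1 : ℝ) 2 := by
        simp only [Set.mem_Icc] at hmem ⊢
        push_neg at hmem ⊢
        intro h
        have := hmem (by linarith)
        linarith
      rw [Set.indicator_of_notMem hnm1, Set.indicator_of_notMem hmem, mul_zero]
  · rintro ⟨h, -, hae⟩
    rw [Filter.EventuallyEq, ae_iff] at hae
    have hz : volume (Set.Ioo ((k : ℝ) + 1) ((k : ℝ) + 2)) = 0 := by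
      refine measure_mono_null ?_ hae
      intro x hx
      obtain ⟨hx1, hx2⟩ := hx
      simp only [Set.mem_setOf_eq]
      intro heq
      have hz0 : u (T^[k + 1] x) = 0 := by
        simp only [hT, hudef, Set.mem_Icc]
        rw [if_pos]
        push_cast
        constructor <;> linarith
      have hp : (∏ i ∈ Finset.Icc 1 (k + 1), u (T^[i] x)) = 0 :=
        Finset.prod_eq_zero (Finset.mem_Icc.mpr ⟨by omega, le_refl _⟩) hz0
      rw [hp, zero_mul, Set.indicator_of_mem (Set.mem_Icc.mpr ⟨hx1.le, hx2.le⟩)] at heq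
      exact zero_ne_one heq
    rw [Real.volume_Ioo] at hz
    have : (k : ℝ) + 2 - ((k : ℝ) + 1) = 1 := by ring
    rw [this] at hz
    norm_num at hz
end

section
/- Consider the Lebesgue measure space on [−1,1], u ≡ 1, and T(x) = |x|/2. Then the indicator χ_{[−1,0]} has no preimage under W_{u,T} in the a.e. sense: there is no measurable h with h(T(x)) = χ_{[−1,0]}(x) for almost every x ∈ [−1,1]. Hence the composition operator C_T = W_{1,T} has descent equal to 1. -/
open MeasureTheory

/-- On `[-1,1]` with Lebesgue measure and `T x = |x|/2`: the indicator `χ_{[-1,0]}` has no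
a.e. preimage under the composition operator `C_T = W_{1,T}`; moreover the ranges of
`C_T²` and `C_T` coincide, so the descent of `C_T` equals `1`. -/
theorem descent_comp_eq_one
    (T : ℝ → ℝ) (hTdef : T = fun x => |x| / 2) :
    (¬ ∃ h : ℝ → ℂ, Measurable h ∧
        (fun x => h (T x)) =ᵐ[volume.restrict (Set.Icc (-1 : ℝ) 1)]
          (Set.Icc (-1 : ℝ) 0).indicator (1 : ℝ → ℂ)) ∧
      ∀ g : ℝ → ℂ, Measurable g →
        ((∃ f : ℝ → ℂ, Measurable f ∧
            (fun x => f (T (T x))) =ᵐ[volume.restrict (Set.Icc (-1 : ℝ) 1)] g) ↔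
          (∃ f : ℝ → ℂ, Measurable f ∧
            (fun x => f (T x)) =ᵐ[volume.restrict (Set.Icc (-1 : ℝ) 1)] g)) := by
  subst hTdef
  constructor
  · rintro ⟨h, hm, hae⟩
    have hae' : ∀ᵐ x ∂(volume : Measure ℝ), x ∈ Set.Icc (-1:ℝ) 1 →
        h (|x|/2) = (Set.Icc (-1:ℝ) 0).indicator (1 : ℝ → ℂ) x :=
      (ae_restrict_iff' measurableSet_Icc).mp hae
    set A : Set ℝ := {x : ℝ | x ∈ Set.Icc (-1:ℝ) 1 →
        h (|x|/2) = (Set.Icc (-1:ℝ) 0).indicator (1 : ℝ → ℂ) x} with hA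
    have hAc : volume Aᶜ = 0 := by
      rw [hA, Set.compl_setOf]
      exact ae_iff.mp hae'
    have hnegAc : volume (-Aᶜ) = 0 := by
      rw [Measure.measure_neg]; exact hAc
    have hbad : volume (Aᶜ ∪ -Aᶜ) = 0 := measure_union_null hAc hnegAc
    have hIoc : ¬ (Set.Ioc (0:ℝ) 1 ⊆ Aᶜ ∪ -Aᶜ) := by
      intro hsub
      have := measure_mono_null hsub hbad
      simp [Real.volume_Ioc] at this
    obtain ⟨x, hxI, hxg⟩ := Set.not_subset.mp hIoc
    have hxA : x ∈ A := by
      by_contra hx; exact hxg (Or.inl hx)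
    have hxnA : -x ∈ A := by
      by_contra hx; exact hxg (Or.inr (by simpa using hx))
    have hx0 : 0 < x := hxI.1
    have hx1 : x ≤ 1 := hxI.2
    have e1 : h (|x|/2) = 0 := by
      have := hxA ⟨by linarith, hx1⟩
      rwa [Set.indicator_of_notMem (by simp; intro _; linarith)] at this
    have e2 : h (|x|/2) = 1 := by
      have := hxnA ⟨by linarith, by linarith⟩
      rw [abs_neg] at this
      rwa [Set.indicator_of_mem (by constructor <;> linarith)] at this
    rw [e1] at e2
    exact zero_ne_one e2
  · intro g hg
    have key : ∀ x : ℝ, |(|x| / 2)| = |x| / 2 := fun x => abs_of_nonneg (by positivity)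
    constructor
    · rintro ⟨f, hf, hfe⟩
      refine ⟨fun y => f (y/2), hf.comp (measurable_id.div_const 2), ?_⟩
      have : (fun x => (fun y => f (y/2)) (|x|/2)) = fun x => f (|(|x| / 2)| / 2) := by
        funext x; simp [key]
      rw [this]; exact hfe
    · rintro ⟨f, hf, hfe⟩
      refine ⟨fun y => f (2*y), hf.comp (measurable_const_mul 2), ?_⟩
      have : (fun x : ℝ => (fun y => f (2*y)) (|(|x| / 2)| / 2)) = fun x => f (|x| / 2) := by
        funext x; rw [key]; ring_nf
      rw [this]; exact hfe
end
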